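/- arXiv:1104.0972 — 4 statements merged into one kernel-verified Lean document; each statement's English description precedes it below -/
import Mathlib

section
/- Let 0 → I → h → g → 0 be an Abelian extension of a Lie algebra g over R. The map ζ : Λⁿ⁺¹(I) → h ⊗ Λⁿ(I) defined by ζ(a₀∧...∧aₙ) = (1/(n+1)) Σᵢ (-1)^i a_i ⊗ (a₀∧...∧â_i∧...∧aₙ) is g-equivariant, where g acts on Λⁿ⁺¹(I) and on h ⊗ Λⁿ(I) by derivations via the induced action. -/
open ExteriorAlgebra
open scoped TensorProduct

/-- The wedge `v 0 ∧ ... ∧ v (n-1)` as an element of the `n`-th exterior power. -/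
noncomputable def wedge (k : Type*) [Field k] {L : Type*} [AddCommGroup L] [Module k L]
    (n : ℕ) (v : Fin n → L) : ⋀[k]^n L :=
  ⟨ExteriorAlgebra.ιMulti k n v, ExteriorAlgebra.ιMulti_range k n (Set.mem_range_self v)⟩

/-- The action of a lift `h₀ ∈ h` of `g ∈ g` on the ideal `I`. -/
def actI {H : Type*} [LieRing H] [LieAlgebra ℝ H] (I : LieIdeal ℝ H)
    (h₀ : H) (a : I) : I :=
  ⟨⁅h₀, (a : H)⁆, I.lie_mem a.2⟩

/-- for an Abelian extension `0 → I → h → g → 0` of a real Lie algebra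
`g`, the map `ζ : Λⁿ⁺¹(I) → h ⊗ Λⁿ(I)`,
`a₀∧...∧aₙ ↦ (1/(n+1)) Σᵢ (-1)^i aᵢ ⊗ (a₀∧...∧âᵢ∧...∧aₙ)`, is `g`-equivariant, where
`g` acts by derivations through any lift `h₀` of `g ∈ g` (`D₁` on `Λⁿ⁺¹(I)` and `D₂`
on `h ⊗ Λⁿ(I)`). -/
theorem zeta_equivariant
    (H G : Type*) [LieRing H] [LieAlgebra ℝ H] [LieRing G] [LieAlgebra ℝ G]
    (ρ : H →ₗ⁅ℝ⁆ G) (hsurj : Function.Surjective ρ)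
    (I : LieIdeal ℝ H) (hker : ∀ x : H, x ∈ I ↔ ρ x = 0)
    (habelian : ∀ a b : H, a ∈ I → b ∈ I → ⁅a, b⁆ = 0) (n : ℕ)
    (g : G) (h₀ : H) (hlift : ρ h₀ = g)
    (ζ : ⋀[ℝ]^(n+1) I →ₗ[ℝ] H ⊗[ℝ] ⋀[ℝ]^n I)
    (hζ : ∀ a : Fin (n+1) → I,
      ζ (wedge ℝ (n+1) a) =
        ((n+1 : ℝ))⁻¹ • ∑ i : Fin (n+1), ((-1 : ℝ) ^ (i : ℕ)) •
          ((a i : H) ⊗ₜ[ℝ] wedge ℝ n (fun m => a (i.succAbove m))))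
    (D₁ : ⋀[ℝ]^(n+1) I →ₗ[ℝ] ⋀[ℝ]^(n+1) I)
    (hD₁ : ∀ a : Fin (n+1) → I,
      D₁ (wedge ℝ (n+1) a) =
        ∑ i : Fin (n+1), wedge ℝ (n+1) (Function.update a i (actI I h₀ (a i))))
    (D₂ : H ⊗[ℝ] ⋀[ℝ]^n I →ₗ[ℝ] H ⊗[ℝ] ⋀[ℝ]^n I)
    (hD₂ : ∀ (b : H) (a : Fin n → I),
      D₂ (b ⊗ₜ[ℝ] wedge ℝ n a) =
        ⁅h₀, b⁆ ⊗ₜ[ℝ] wedge ℝ n a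
        + ∑ i : Fin n, b ⊗ₜ[ℝ] wedge ℝ n (Function.update a i (actI I h₀ (a i)))) :
    ∀ x : ⋀[ℝ]^(n+1) I, ζ (D₁ x) = D₂ (ζ x) := by
  -- It suffices to check on wedges, which span.
  have hspan : Submodule.span ℝ (Set.range (wedge ℝ (n+1) (L := I))) = ⊤ := by
    apply Submodule.map_injective_of_injective (Submodule.injective_subtype (⋀[ℝ]^(n+1) I))
    rw [Submodule.map_span, Submodule.map_subtype_top]
    have : (⋀[ℝ]^(n+1) I).subtype '' Set.range (wedge ℝ (n+1) (L := I))
        = Set.range (ExteriorAlgebra.ιMulti ℝ (n+1) (M := I)) := by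
      ext x
      constructor
      · rintro ⟨y, ⟨v, rfl⟩, rfl⟩; exact ⟨v, rfl⟩
      · rintro ⟨v, rfl⟩; exact ⟨wedge ℝ (n+1) v, ⟨v, rfl⟩, rfl⟩
    rw [this, ExteriorAlgebra.ιMulti_span_fixedDegree]
  have key : ∀ a : Fin (n+1) → I,
      ζ (D₁ (wedge ℝ (n+1) a)) = D₂ (ζ (wedge ℝ (n+1) a)) := by
    intro a
    rw [hD₁, map_sum, hζ, map_smul, map_sum]
    simp only [hζ, map_smul, hD₂]
    rw [← Finset.smul_sum]
    congr 1
    rw [Finset.sum_comm]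
    refine Finset.sum_congr rfl fun i _ => ?_
    rw [Fin.sum_univ_succAbove
      (fun j => (-1:ℝ)^(i:ℕ) • ((Function.update a j (actI I h₀ (a j)) i : H) ⊗ₜ[ℝ]
        wedge ℝ n (fun m => Function.update a j (actI I h₀ (a j)) (i.succAbove m)))) i,
      smul_add, Finset.smul_sum]
    congr 1
    · congr 2
      · rw [Function.update_self]; rfl
      · congr 1
        funext m
        rw [Function.update_of_ne (Fin.succAbove_ne i m)]
    · refine Finset.sum_congr rfl fun m _ => ?_
      congr 2
      · exact congrArg _ (Function.update_of_ne (Fin.succAbove_ne i m).symm _ _)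
      · congr 1
        funext m'
        by_cases hm : m' = m
        · subst hm
          rw [Function.update_self, Function.update_self]
        · rw [Function.update_of_ne (fun h => hm (Fin.succAbove_right_injective h)),
            Function.update_of_ne hm]
  intro x
  have hx : x ∈ Submodule.span ℝ (Set.range (wedge ℝ (n+1) (L := I))) := by
    rw [hspan]; trivial
  induction hx using Submodule.span_induction with
  | mem y hy => obtain ⟨v, rfl⟩ := hy; exact key v
  | zero => simp
  | add y z _ _ hy hz => simp [hy, hz]
  | smul c y _ hy => simp [hy]
end

section
/- Let g be a simple real Lie algebra and I a g-module such that I ≅ g as g-modules (I considered as an Abelian Lie algebra), and let h = g ⋉ I be the semidirect product. Let B : g → g* be the isomorphism induced by the Killing form, α : g → I a g-module isomorphism, and {bᵢ} a basis of g with dual basis {bᵢ*}. Then the balanced tensor ω = Σᵢ B⁻¹(bᵢ*) ⊗ α(bᵢ) + α(B⁻¹(bᵢ*)) ⊗ bᵢ ∈ h ⊗ h is h-invariant: [ω, x] = 0 for all x ∈ h, where h acts on h ⊗ h by derivations via the adjoint action. -/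
/-!
Identify `G ⊗ G` with `End G` by contracting the first factor against the Killing form `K`.
Since `K` is invariant, this identification is `G`-equivariant, and the tensor `C = ∑ᵢ cᵢ ⊗ bᵢ`
goes to the identity, so `⁅z, C⁆ = 0` for every `z ∈ G`. Writing `φ = fv ∘ α` and
`x = fg g + φ y`, the semidirect product relations give
`⁅x, (fg ⊗ φ + φ ⊗ fg) t⁆ = (fg ⊗ φ + φ ⊗ fg) ⁅g, t⁆ + (φ ⊗ φ) ⁅y, t⁆`, while the balanced
tensor is `(fg ⊗ φ + φ ⊗ fg) C`.
-/

open scoped TensorProduct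

noncomputable def casimirTensor {R M ι : Type*} [CommSemiring R] [AddCommMonoid M] [Module R M]
    [Fintype ι] (b : Module.Basis ι R M) (c : ι → M) : M ⊗[R] M :=
  ∑ i, c i ⊗ₜ b i

namespace LinearMap.BilinForm

variable {R L M ι : Type*} [CommRing R] [LieRing L] [LieAlgebra R L]
  [AddCommGroup M] [Module R M] [LieRingModule L M] [LieModule R L M]

noncomputable def contract (K : LinearMap.BilinForm R M) (u : M) : M ⊗[R] M →ₗ[R] M :=
  (TensorProduct.lid R M).toLinearMap ∘ₗ (K u).rTensor M

@[simp]
lemma contract_tmul (K : LinearMap.BilinForm R M) (u x v : M) :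
    K.contract u (x ⊗ₜ v) = K u x • v := by
  simp [contract]

lemma eq_zero_of_forall_contract_eq_zero {K : LinearMap.BilinForm R M} {b : Module.Basis ι R M}
    {c : ι → M} (hc : ∀ i x, K (c i) x = b.coord i x) {t : M ⊗[R] M}
    (ht : ∀ i, K.contract (c i) t = 0) : t = 0 := by
  classical
  refine (TensorProduct.equivFinsuppOfBasisLeft b).map_eq_zero_iff.mp (Finsupp.ext fun i => ?_)
  rw [TensorProduct.equivFinsuppOfBasisLeft_apply, Finsupp.coe_zero, Pi.zero_apply, ← ht i,
    contract, LinearMap.ext (hc i)]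
  rfl

lemma contract_lie {K : LinearMap.BilinForm R M} (hK : K.lieInvariant L) (y : L) (u : M)
    (t : M ⊗[R] M) : K.contract u ⁅y, t⁆ = ⁅y, K.contract u t⁆ - K.contract ⁅y, u⁆ t := by
  induction t using TensorProduct.induction_on with
  | zero => simp
  | tmul x v =>
    simp only [TensorProduct.LieModule.lie_tmul_right, map_add, contract_tmul, hK y u x, neg_smul,
      sub_neg_eq_add, lie_smul, add_comm]
  | add t s ht hs => simp only [lie_add, map_add, ht, hs]; abel

variable [Fintype ι] {K : LinearMap.BilinForm R M} {b : Module.Basis ι R M} {c : ι → M}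

lemma contract_casimirTensor (hK : LinearMap.IsSymm K) (hc : ∀ i x, K (c i) x = b.coord i x)
    (u : M) : K.contract u (casimirTensor b c) = u := by
  simp only [casimirTensor, map_sum, contract_tmul, ← hK.eq _ u, RingHom.id_apply, hc,
    Module.Basis.coord_apply]
  exact b.sum_repr u

theorem lie_casimirTensor (hK_symm : LinearMap.IsSymm K) (hK_inv : K.lieInvariant L)
    (hc : ∀ i x, K (c i) x = b.coord i x) (y : L) : ⁅y, casimirTensor b c⁆ = 0 :=
  eq_zero_of_forall_contract_eq_zero hc fun i => by
    rw [contract_lie hK_inv, contract_casimirTensor hK_symm hc, contract_casimirTensor hK_symm hc,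
      sub_self]

end LinearMap.BilinForm

section TensorSquare

variable {R G H : Type*} [CommRing R] [LieRing G] [LieAlgebra R G] [LieRing H] [LieAlgebra R H]

open TensorProduct

lemma eq_neg_lie_of_apply_tmul {D : H → H ⊗[R] H →ₗ[R] H ⊗[R] H}
    (hD : ∀ x u v : H, D x (u ⊗ₜ v) = ⁅u, x⁆ ⊗ₜ v + u ⊗ₜ ⁅v, x⁆) (x : H) (t : H ⊗[R] H) :
    D x t = -⁅x, t⁆ := by
  induction t using TensorProduct.induction_on with
  | zero => simp
  | tmul u v =>
    rw [hD, LieModule.lie_tmul_right, neg_add, ← neg_tmul, ← tmul_neg, lie_skew, lie_skew]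
  | add t s ht hs => rw [map_add, ht, hs, lie_add, neg_add]

lemma lie_map_add_map {fg : G →ₗ⁅R⁆ H} {fv : G →ₗ[R] H}
    (hact : ∀ u v, ⁅fg u, fv v⁆ = fv ⁅u, v⁆) (habelian : ∀ u v, ⁅fv u, fv v⁆ = 0)
    (g y : G) (t : G ⊗[R] G) :
    ⁅fg g + fv y, map fg.toLinearMap fv t + map fv fg.toLinearMap t⁆ =
      map fg.toLinearMap fv ⁅g, t⁆ + map fv fg.toLinearMap ⁅g, t⁆ + map fv fv ⁅y, t⁆ := by
  induction t using TensorProduct.induction_on with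
  | zero => simp
  | tmul u v =>
    have hvg : ∀ w, ⁅fv y, fg w⁆ = fv ⁅y, w⁆ := fun w => by
      rw [← lie_skew, hact, ← map_neg, lie_skew]
    simp only [map_tmul, LieModule.lie_tmul_right, lie_add, add_lie, LieHom.coe_toLinearMap,
      LieHom.map_lie, map_add, hact, hvg, habelian, tmul_zero, zero_tmul, add_zero, zero_add]
    abel
  | add t s ht hs =>
    simp only [map_add, lie_add] at ht hs ⊢
    linear_combination (norm := abel) ht + hs

end TensorSquare

theorem balanced_tensor_invariant_general
    (G : Type*) [LieRing G] [LieAlgebra ℝ G] [FiniteDimensional ℝ G]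
    (I : Type*) [AddCommGroup I] [Module ℝ I]
    [LieRingModule G I] [LieModule ℝ G I]
    (α : G ≃ₗ[ℝ] I) (hα : ∀ (g x : G), α ⁅g, x⁆ = ⁅g, α x⁆)
    (H : Type*) [LieRing H] [LieAlgebra ℝ H]
    (fg : G →ₗ⁅ℝ⁆ H) (fv : I →ₗ[ℝ] H)
    (habelian : ∀ a b : I, ⁅fv a, fv b⁆ = 0)
    (hact : ∀ (g : G) (a : I), ⁅fg g, fv a⁆ = fv ⁅g, a⁆)
    (hspan : ∀ x : H, ∃ (g : G) (a : I), x = fg g + fv a)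
    (ι : Type*) [Fintype ι] (b : Module.Basis ι ℝ G)
    (c : ι → G) (hc : ∀ (i : ι) (x : G), killingForm ℝ G (c i) x = b.coord i x)
    (D : H → (H ⊗[ℝ] H →ₗ[ℝ] H ⊗[ℝ] H))
    (hD : ∀ (x u v : H), D x (u ⊗ₜ[ℝ] v) = ⁅u, x⁆ ⊗ₜ[ℝ] v + u ⊗ₜ[ℝ] ⁅v, x⁆) :
    ∀ x : H, D x (∑ i : ι,
      (fg (c i) ⊗ₜ[ℝ] fv (α (b i)) + fv (α (c i)) ⊗ₜ[ℝ] fg (b i))) = 0 := by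
  intro x
  obtain ⟨g, a, rfl⟩ := hspan x
  obtain ⟨y, rfl⟩ := α.surjective a
  set φ : G →ₗ[ℝ] H := fv ∘ₗ α.toLinearMap
  have hφ : ∀ u v, ⁅fg u, φ v⁆ = φ ⁅u, v⁆ := fun u v => by simp [φ, hact, hα]
  have hω : ∑ i, (fg (c i) ⊗ₜ[ℝ] φ (b i) + φ (c i) ⊗ₜ[ℝ] fg (b i)) =
      TensorProduct.map fg.toLinearMap φ (casimirTensor b c) +
        TensorProduct.map φ fg.toLinearMap (casimirTensor b c) := by
    simp only [casimirTensor, map_sum, TensorProduct.map_tmul, LieHom.coe_toLinearMap,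
      Finset.sum_add_distrib]
  have hC : ∀ z : G, ⁅z, casimirTensor b c⁆ = 0 :=
    LinearMap.BilinForm.lie_casimirTensor (LieModule.traceForm_isSymm ℝ G G)
      (LieModule.traceForm_lieInvariant ℝ G G) hc
  change D (fg g + φ y) (∑ i, (fg (c i) ⊗ₜ[ℝ] φ (b i) + φ (c i) ⊗ₜ[ℝ] fg (b i))) = 0
  rw [hω, eq_neg_lie_of_apply_tmul hD, lie_map_add_map hφ (fun u v => habelian _ _), hC, hC]
  simp

/-- let `g` be a simple real Lie algebra, `I` a `g`-module isomorphic to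
the adjoint module `g` (regarded as an Abelian Lie algebra), and `h = g ⋉ I` the
semidirect product (presented here by `fg : g → h`, `fv : I → h` with the semidirect
product bracket relations, jointly spanning `h`).  Let `B : g → g*` come from the
Killing form, `α : g ≅ I` a `g`-module isomorphism, `{bᵢ}` a basis of `g` with dual
basis `{bᵢ*}`, and `c i = B⁻¹(bᵢ*)`.  Then the balanced tensor
`ω = Σᵢ B⁻¹(bᵢ*) ⊗ α(bᵢ) + α(B⁻¹(bᵢ*)) ⊗ bᵢ ∈ h ⊗ h` is `h`-invariant for the
derivation action `[u⊗v, x] = [u,x]⊗v + u⊗[v,x]`. -/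
theorem balanced_tensor_invariant
    (G : Type*) [LieRing G] [LieAlgebra ℝ G] [FiniteDimensional ℝ G]
    [LieAlgebra.IsSimple ℝ G]
    (I : Type*) [AddCommGroup I] [Module ℝ I]
    [LieRingModule G I] [LieModule ℝ G I]
    (α : G ≃ₗ[ℝ] I) (hα : ∀ (g x : G), α ⁅g, x⁆ = ⁅g, α x⁆)
    (H : Type*) [LieRing H] [LieAlgebra ℝ H]
    (fg : G →ₗ⁅ℝ⁆ H) (fv : I →ₗ[ℝ] H)
    (habelian : ∀ a b : I, ⁅fv a, fv b⁆ = 0)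
    (hact : ∀ (g : G) (a : I), ⁅fg g, fv a⁆ = fv ⁅g, a⁆)
    (hspan : ∀ x : H, ∃ (g : G) (a : I), x = fg g + fv a)
    (ι : Type*) [Fintype ι] (b : Module.Basis ι ℝ G)
    (c : ι → G) (hc : ∀ (i : ι) (x : G), killingForm ℝ G (c i) x = b.coord i x)
    (D : H → (H ⊗[ℝ] H →ₗ[ℝ] H ⊗[ℝ] H))
    (hD : ∀ (x u v : H), D x (u ⊗ₜ[ℝ] v) = ⁅u, x⁆ ⊗ₜ[ℝ] v + u ⊗ₜ[ℝ] ⁅v, x⁆) :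
    ∀ x : H, D x (∑ i : ι,
      (fg (c i) ⊗ₜ[ℝ] fv (α (b i)) + fv (α (c i)) ⊗ₜ[ℝ] fg (b i))) = 0 :=
  balanced_tensor_invariant_general G I α hα H fg fv habelian hact hspan ι b c hc D hD
end

section
/- For g = sp_n(R) acting on R^{2n} by the standard representation, there is no non-zero sp_n(R)-module homomorphism from the adjoint representation sp_n(R) to Λᵏ(R^{2n}) for any k ≥ 0. -/
/-!
Let `Hᵢ = diag(Eᵢᵢ, -Eᵢᵢ)` and let `Pᵢ ∈ sp` have upper right block `2Eᵢᵢ`, so that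
`⁅Hᵢ, Pᵢ⁆ = 2 Pᵢ`. An equivariant `φ` sends `Pᵢ` to an eigenvector of `θ Hᵢ` with eigenvalue `2`.
But `θ Hᵢ` multiplies the wedge `e_{r₁} ∧ ⋯ ∧ e_{r_k}` of basis vectors by the number of `rⱼ`
equal to `inl i` minus the number equal to `inr i`, which is `-1`, `0` or `1` for a nonzero wedge;
hence `(θ Hᵢ)³ = θ Hᵢ`, the eigenvalue `2` cannot occur, and `φ Pᵢ = 0`. Equivariance makes the
kernel of `φ` a Lie ideal, and the ideal generated by the `Pᵢ` is all of `sp` (using that `2`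
is invertible), so `φ = 0`.
-/

open ExteriorAlgebra

open Matrix

theorem Module.End.pow_apply_of_apply_eq_smul {R M : Type*} [CommSemiring R] [AddCommMonoid M]
    [Module R M] {T : Module.End R M} {c : R} {w : M} (hw : T w = c • w) (n : ℕ) :
    (T ^ n) w = c ^ n • w := by
  induction n with
  | zero => simp
  | succ n ih => rw [pow_succ', Module.End.mul_apply, ih, map_smul, hw, smul_smul, pow_succ]

theorem Module.End.eq_zero_of_apply_eq_smul_of_pow_three_eq_self {K V : Type*} [Field K]
    [AddCommGroup V] [Module K V] {T : Module.End K V} (hT : T ^ 3 = T) {c : K} (hc : c ^ 3 ≠ c)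
    {w : V} (hw : T w = c • w) : w = 0 := by
  have : (c ^ 3 - c) • w = 0 := by
    rw [sub_smul, ← Module.End.pow_apply_of_apply_eq_smul hw, ← hw, hT, sub_self]
  exact (smul_eq_zero.1 this).resolve_left (sub_ne_zero.2 hc)

theorem Finset.sum_pi_single_sub_pi_single_pow_three {ι R : Type*} [DecidableEq ι] [Ring R]
    (a b : ι) (s : Finset ι) :
    (∑ p ∈ s, (Pi.single a 1 - Pi.single b 1 : ι → R) p) ^ 3 =
      ∑ p ∈ s, (Pi.single a 1 - Pi.single b 1 : ι → R) p := by
  simp only [Pi.sub_apply, Finset.sum_sub_distrib, Finset.sum_pi_single']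
  split_ifs <;> norm_num

theorem Matrix.invOf_two_smul_add_transpose {m R : Type*} [Semiring R] [Invertible (2 : R)]
    {S : Matrix m m R} (hS : Sᵀ = S) : (⅟2 : R) • S + ((⅟2 : R) • S)ᵀ = S := by
  rw [transpose_smul, hS, ← add_smul, invOf_two_add_invOf_two, one_smul]

section DerivationAction

variable {K I : Type*} [Field K] [Fintype I] [DecidableEq I] {k : ℕ}

def IsDerivationExtension (θ : Matrix I I K → (⋀[K]^k (I → K) →ₗ[K] ⋀[K]^k (I → K))) :
    Prop :=
  ∀ (X : Matrix I I K) (v : Fin k → I → K),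
    θ X (wedge K k v) = ∑ i : Fin k, wedge K k (Function.update v i (X *ᵥ v i))

namespace IsDerivationExtension

variable {θ : Matrix I I K → (⋀[K]^k (I → K) →ₗ[K] ⋀[K]^k (I → K))}

theorem apply_diagonal_wedge_single
    (hθ : IsDerivationExtension θ) (d : I → K) (r : Fin k → I) :
    θ (diagonal d) (wedge K k fun j => Pi.single (r j) 1) =
      (∑ j, d (r j)) • wedge K k fun j => Pi.single (r j) 1 := by
  have hmul : ∀ j, diagonal d *ᵥ Pi.single (r j) 1 = d (r j) • Pi.single (r j) (1 : K) := by
    intro j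
    rw [diagonal_mulVec_single, ← Pi.single_smul', smul_eq_mul, mul_one]
  rw [hθ]
  simp only [hmul, Finset.sum_smul]
  refine Finset.sum_congr rfl fun j _ => ?_
  exact ((exteriorPower.ιMulti K k).map_update_smul _ j _ _).trans
    (by rw [Function.update_eq_self]; rfl)

theorem pow_three_diagonal_eq_self
    (hθ : IsDerivationExtension θ) {d : I → K} (hd : ∀ s : Finset I, (∑ p ∈ s, d p) ^ 3 = ∑ p ∈ s, d p) :
    θ (diagonal d) ^ 3 = θ (diagonal d) := by
  refine LinearMap.ext_on (exteriorPower.ιMulti_span_of_span K k _ (Pi.basisFun K I).span_eq) ?_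
  rintro _ ⟨a, ha, rfl⟩
  obtain ⟨r, rfl⟩ := Set.range_subset_range_iff_exists_comp.1 ha
  by_cases hr : Function.Injective r
  · have hsum : ∑ j, d (r j) = ∑ p ∈ Finset.univ.image r, d p :=
      (Finset.sum_image fun _ _ _ _ h => hr h).symm
    simp only [Function.comp_def, Pi.basisFun_apply]
    change (θ (diagonal d) ^ 3) (wedge K k _) = θ (diagonal d) (wedge K k _)
    rw [Module.End.pow_apply_of_apply_eq_smul (hθ.apply_diagonal_wedge_single d r),
      hθ.apply_diagonal_wedge_single d r, hsum, hd]
  · rw [AlternatingMap.map_eq_zero_of_not_injective _ _ fun h => hr h.of_comp, map_zero, map_zero]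

theorem eq_zero_of_apply_diagonal_eq_smul
    (hθ : IsDerivationExtension θ) {d : I → K} (hd : ∀ s : Finset I, (∑ p ∈ s, d p) ^ 3 = ∑ p ∈ s, d p)
    {c : K} (hc : c ^ 3 ≠ c) {w : ⋀[K]^k (I → K)} (hw : θ (diagonal d) w = c • w) :
    w = 0 :=
  Module.End.eq_zero_of_apply_eq_smul_of_pow_three_eq_self (hθ.pow_three_diagonal_eq_self hd) hc hw

end IsDerivationExtension

end DerivationAction

namespace LieAlgebra.Symplectic

variable {l R : Type*} [Fintype l] [DecidableEq l] [CommRing R]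

theorem fromBlocks_mem_sp_iff (A B C D : Matrix l l R) :
    fromBlocks A B C D ∈ sp l R ↔ D = -Aᵀ ∧ Bᵀ = B ∧ Cᵀ = C := by
  simp only [sp, mem_skewAdjointMatricesLieSubalgebra, mem_skewAdjointMatricesSubmodule,
    Matrix.IsSkewAdjoint, Matrix.IsAdjointPair, J, fromBlocks_transpose, fromBlocks_multiply,
    fromBlocks_neg, fromBlocks_inj]
  simp only [Matrix.zero_mul, Matrix.mul_one, add_zero, Matrix.mul_neg, Matrix.mul_zero, zero_add,
    neg_zero, Matrix.one_mul, Matrix.neg_mul, neg_neg]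
  constructor
  · rintro ⟨hC, hD, -, hB⟩
    exact ⟨hD.symm, neg_inj.1 hB, hC⟩
  · rintro ⟨rfl, hB, hC⟩
    simp [hB, hC]

variable (l R) in
def diagBlock : Matrix l l R →ₗ[R] sp l R where
  toFun A := ⟨fromBlocks A 0 0 (-Aᵀ),
    (fromBlocks_mem_sp_iff ..).2 ⟨rfl, by simp, by simp⟩⟩
  map_add' A B := by ext : 1; simp [fromBlocks_add, add_comm]
  map_smul' c A := by ext : 1; simp [fromBlocks_smul]

/- The off-diagonal blocks of elements of `sp` are symmetric; writing them as `S + Sᵀ` makes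
`upperBlock` and `lowerBlock` linear maps on all matrices. -/
variable (l R) in
def upperBlock : Matrix l l R →ₗ[R] sp l R where
  toFun S := ⟨fromBlocks 0 (S + Sᵀ) 0 0,
    (fromBlocks_mem_sp_iff ..).2 ⟨by simp, by simp [add_comm], by simp⟩⟩
  map_add' S T := by ext : 1; simp [fromBlocks_add, add_add_add_comm]
  map_smul' c S := by ext : 1; simp [fromBlocks_smul]

variable (l R) in
def lowerBlock : Matrix l l R →ₗ[R] sp l R where
  toFun T := ⟨fromBlocks 0 0 (T + Tᵀ) 0,
    (fromBlocks_mem_sp_iff ..).2 ⟨by simp, by simp, by simp [add_comm]⟩⟩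
  map_add' S T := by ext : 1; simp [fromBlocks_add, add_add_add_comm]
  map_smul' c S := by ext : 1; simp [fromBlocks_smul]

@[simp] theorem coe_diagBlock (A : Matrix l l R) :
    (diagBlock l R A : Matrix (l ⊕ l) (l ⊕ l) R) = fromBlocks A 0 0 (-Aᵀ) := rfl
@[simp] theorem coe_upperBlock (S : Matrix l l R) :
    (upperBlock l R S : Matrix (l ⊕ l) (l ⊕ l) R) = fromBlocks 0 (S + Sᵀ) 0 0 := rfl
@[simp] theorem coe_lowerBlock (T : Matrix l l R) :
    (lowerBlock l R T : Matrix (l ⊕ l) (l ⊕ l) R) = fromBlocks 0 0 (T + Tᵀ) 0 := rfl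

theorem coe_lie (X Y : sp l R) :
    ((⁅X, Y⁆ : sp l R) : Matrix (l ⊕ l) (l ⊕ l) R) = X * Y - Y * X :=
  rfl

theorem lie_diagBlock_upperBlock (A S : Matrix l l R) :
    ⁅diagBlock l R A, upperBlock l R S⁆ = upperBlock l R (A * (S + Sᵀ)) := by
  ext : 1
  rw [coe_lie]
  simp [fromBlocks_multiply, sub_eq_add_neg, fromBlocks_neg, fromBlocks_add, fromBlocks_inj,
    Matrix.transpose_mul, Matrix.mul_add, Matrix.add_mul]
  abel

theorem lie_diagBlock_lowerBlock (A T : Matrix l l R) :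
    ⁅diagBlock l R A, lowerBlock l R T⁆ = -lowerBlock l R (Aᵀ * (T + Tᵀ)) := by
  ext : 1
  rw [coe_lie]
  simp [fromBlocks_multiply, sub_eq_add_neg, fromBlocks_neg, fromBlocks_add, fromBlocks_inj,
    Matrix.transpose_mul, Matrix.mul_add, Matrix.add_mul]
  abel

theorem lie_upperBlock_lowerBlock (S T : Matrix l l R) :
    ⁅upperBlock l R S, lowerBlock l R T⁆ = diagBlock l R ((S + Sᵀ) * (T + Tᵀ)) := by
  ext : 1
  rw [coe_lie]
  simp [fromBlocks_multiply, sub_eq_add_neg, fromBlocks_neg, fromBlocks_add, fromBlocks_inj,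
    Matrix.transpose_mul, Matrix.mul_add, Matrix.add_mul]
  abel

theorem lowerBlock_transpose (T : Matrix l l R) : lowerBlock l R Tᵀ = lowerBlock l R T := by
  ext : 1
  simp [add_comm]

theorem lie_diagBlock_single_upperBlock_single (i : l) :
    ⁅diagBlock l R (single i i 1), upperBlock l R (single i i 1)⁆ =
      (2 : R) • upperBlock l R (single i i 1) := by
  rw [lie_diagBlock_upperBlock, transpose_single, Matrix.mul_add, single_mul_single_same, mul_one,
    ← two_smul R, map_smul]

theorem coe_diagBlock_single (i : l) :
    (diagBlock l R (single i i 1) : Matrix (l ⊕ l) (l ⊕ l) R) =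
      diagonal (Pi.single (Sum.inl i) 1 - Pi.single (Sum.inr i) 1) := by
  rw [coe_diagBlock, ← diagonal_single, diagonal_transpose, diagonal_neg, fromBlocks_diagonal]
  congr 1
  ext (p | p) <;> simp [Pi.single_apply]

section Invertible

variable [Invertible (2 : R)]

theorem eq_diagBlock_add_upperBlock_add_lowerBlock (X : sp l R) :
    X = diagBlock l R (toBlocks₁₁ X.1) + upperBlock l R ((⅟2 : R) • toBlocks₁₂ X.1)
      + lowerBlock l R ((⅟2 : R) • toBlocks₂₁ X.1) := by
  have hX := X.2
  rw [← fromBlocks_toBlocks X.1, fromBlocks_mem_sp_iff] at hX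
  obtain ⟨hD, hB, hC⟩ := hX
  ext : 1
  conv_lhs => rw [← fromBlocks_toBlocks X.1]
  rw [AddMemClass.coe_add, AddMemClass.coe_add, coe_diagBlock, coe_upperBlock, coe_lowerBlock,
    invOf_two_smul_add_transpose hB, invOf_two_smul_add_transpose hC, fromBlocks_add,
    fromBlocks_add, hD]
  simp

variable {I : LieIdeal R (sp l R)}

theorem upperBlock_mem (hI : ∀ i, upperBlock l R (single i i 1) ∈ I) (S : Matrix l l R) :
    upperBlock l R S ∈ I := by
  have h1 : upperBlock l R 1 ∈ I := by
    rw [← Matrix.sum_single_one, map_sum]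
    exact I.sum_mem fun i _ => hI i
  have := lie_mem_right R _ I (diagBlock l R ((⅟2 : R) • S)) _ h1
  rwa [lie_diagBlock_upperBlock, transpose_one, Matrix.smul_mul, Matrix.mul_add, Matrix.mul_one,
    ← two_smul R S, smul_smul, invOf_mul_self, one_smul] at this

theorem diagBlock_mem (hU : ∀ S, upperBlock l R S ∈ I) (A : Matrix l l R) :
    diagBlock l R A ∈ I := by
  induction A using Matrix.induction_on' with
  | h_zero => simp
  | h_add A B hA hB => rw [map_add]; exact add_mem hA hB
  | h_std_basis i j x =>
    have hE : (⅟2 : R) • single i i (1 : R) + ((⅟2 : R) • single i i 1)ᵀ = single i i 1 :=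
      invOf_two_smul_add_transpose (transpose_single _ _ _)
    have hmem := fun T => lie_mem_left R _ I _ (lowerBlock l R T) (hU ((⅟2 : R) • single i i 1))
    rcases eq_or_ne i j with rfl | hij
    · have := hmem ((⅟2 : R) • single i i x)
      rwa [lie_upperBlock_lowerBlock, hE, invOf_two_smul_add_transpose (transpose_single _ _ _),
        single_mul_single_same, one_mul] at this
    · have := hmem (single i j x)
      rwa [lie_upperBlock_lowerBlock, hE, transpose_single, Matrix.mul_add,
        single_mul_single_same, single_mul_single_of_ne (h := hij), one_mul, add_zero] at this

theorem lowerBlock_mem (hD : ∀ A, diagBlock l R A ∈ I) (T : Matrix l l R) :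
    lowerBlock l R T ∈ I := by
  have := lie_mem_left R _ I _ (lowerBlock l R ((⅟2 : R) • T)) (hD 1)
  rwa [lie_diagBlock_lowerBlock, neg_mem_iff, transpose_one, Matrix.one_mul, transpose_smul,
    ← smul_add, map_smul, map_add, lowerBlock_transpose, ← two_smul R, smul_smul,
    invOf_mul_self, one_smul] at this

theorem eq_top_of_upperBlock_single_mem (hI : ∀ i, upperBlock l R (single i i 1) ∈ I) :
    I = ⊤ := by
  have hU := upperBlock_mem hI
  have hD := diagBlock_mem hU
  rw [eq_top_iff]
  rintro X -
  rw [eq_diagBlock_add_upperBlock_add_lowerBlock X]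
  exact add_mem (add_mem (hD _) (hU _)) (lowerBlock_mem hD _)

end Invertible

end LieAlgebra.Symplectic

open LieAlgebra.Symplectic

/-- for `g = sp_n(ℝ)` acting on `ℝ^{2n}` by the standard representation
(extended to `Λᵏ(ℝ^{2n})` by derivations `θ`), there is no non-zero `sp_n(ℝ)`-module
homomorphism from the adjoint representation `sp_n(ℝ)` to `Λᵏ(ℝ^{2n})` for any `k`. -/
theorem sp_n_no_adjoint_summand
    (n k : ℕ)
    (θ : Matrix (Fin n ⊕ Fin n) (Fin n ⊕ Fin n) ℝ →
      (⋀[ℝ]^k ((Fin n ⊕ Fin n) → ℝ) →ₗ[ℝ] ⋀[ℝ]^k ((Fin n ⊕ Fin n) → ℝ)))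
    (hθ : ∀ (X : Matrix (Fin n ⊕ Fin n) (Fin n ⊕ Fin n) ℝ)
      (v : Fin k → ((Fin n ⊕ Fin n) → ℝ)),
      θ X (wedge ℝ k v) =
        ∑ i : Fin k, wedge ℝ k (Function.update v i (X.mulVec (v i)))) :
    ∀ φ : ↥(LieAlgebra.Symplectic.sp (Fin n) ℝ) →ₗ[ℝ] ⋀[ℝ]^k ((Fin n ⊕ Fin n) → ℝ),
      (∀ X Y : ↥(LieAlgebra.Symplectic.sp (Fin n) ℝ),
        φ ⁅X, Y⁆ = θ (X : Matrix (Fin n ⊕ Fin n) (Fin n ⊕ Fin n) ℝ) (φ Y)) →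
      φ = 0 := by
  intro φ hφ
  let I : LieIdeal ℝ (sp (Fin n) ℝ) :=
    { LinearMap.ker φ with
      lie_mem := fun {X Y} (hY : φ Y = 0) => show φ _ = 0 by rw [hφ, hY, map_zero] }
  have hP : ∀ i, upperBlock (Fin n) ℝ (single i i 1) ∈ I := by
    intro i
    refine IsDerivationExtension.eq_zero_of_apply_diagonal_eq_smul hθ
      (Finset.sum_pi_single_sub_pi_single_pow_three (Sum.inl i) (Sum.inr i)) (c := 2)
      (by norm_num) ?_
    rw [← coe_diagBlock_single, ← hφ, lie_diagBlock_single_upperBlock_single, map_smul]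
  have hI : I = ⊤ := eq_top_of_upperBlock_single_mem hP
  ext X : 1
  exact (hI ▸ LieSubmodule.mem_top X : X ∈ I)
end

section
/- Let g = so_n(R) ⊆ h = so_n(R) ⋉ Rⁿ (n ≥ 3). In the Leibniz complex of h, the element λ = Σ_{σ ∈ Sh(2,n-2)} sgn(σ) α_{σ(1)σ(2)} ⊗ ε(e_{σ(3)} ∧ e_{σ(4)} ∧ ... ∧ e_{σ(n)}) ∈ h^{⊗(n-1)} is a cycle, i.e., d_Leibniz(λ) = 0, where ε : Λ^{n-2}(Rⁿ) → (Rⁿ)^{⊗(n-2)} ⊆ h^{⊗(n-2)} is the skew-symmetrization map and Sh(2,n-2) denotes the (2,n-2)-shuffles in Sₙ. -/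
open scoped TensorProduct
open Matrix

/-- From `v : Fin (n+1) → L` and `i < j`, the family of `n` elements obtained by
replacing the `i`-th entry by `⁅v i, v j⁆` and deleting the `j`-th entry. -/
def bdel {L : Type*} [LieRing L]
    {n : ℕ} (v : Fin (n + 1) → L) (i j : Fin (n + 1)) (h : i < j) : Fin n → L :=
  Function.update (v ∘ j.succAbove)
    ⟨i.1, Nat.lt_of_lt_of_le h (Nat.lt_succ_iff.mp j.isLt)⟩ ⁅v i, v j⁆

/-- `α_{ij} = x_i ∂_j - x_j ∂_i ∈ so_n(ℝ)`. -/
noncomputable def soA {n : ℕ} (i j : Fin n) : Matrix (Fin n) (Fin n) ℝ :=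
  Matrix.single i j 1 - Matrix.single j i 1

/-!
Every summand of `λ` is separately a cycle: in `α_{ab} ⊗ e_{s₁} ⊗ ⋯ ⊗ e_{s_{n-2}}` the indices
`sₖ` avoid `a` and `b`, so `α_{ab}` kills every `e_{sₖ}`, and the `e`'s commute with each other.
Hence all brackets of two entries vanish, and so does every term of the Leibniz differential.
-/

theorem tprod_bdel_eq_zero {R L : Type*} [CommSemiring R] [LieRing L] [Module R L] {n : ℕ}
    (v : Fin (n + 1) → L) {i j : Fin (n + 1)} (hij : i < j)
    (hv : ⁅v i, v j⁆ = 0) : PiTensorProduct.tprod R (bdel v i j hij) = 0 := by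
  rw [bdel, hv]
  exact (PiTensorProduct.tprod R).map_update_zero _ _

theorem sum_tprod_bdel_eq_zero {R L : Type*} [CommRing R] [LieRing L] [Module R L] {n : ℕ}
    (v : Fin (n + 1) → L) (hv : ∀ i j, i < j → ⁅v i, v j⁆ = 0) :
    ∑ i : Fin (n + 1), ∑ j : Fin (n + 1),
      (if hij : i < j then
        ((-1 : R) ^ ((j : ℕ) + 1)) • PiTensorProduct.tprod R (bdel v i j hij) else 0) = 0 :=
  Finset.sum_eq_zero fun i _ => Finset.sum_eq_zero fun j _ => by
    split_ifs with hij
    · rw [tprod_bdel_eq_zero v hij (hv i j hij), smul_zero]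
    · rfl

theorem lie_eq_zero_of_lt_of_forall_succ {L : Type*} [LieRing L] {n : ℕ} (v : Fin (n + 1) → L)
    (h0 : ∀ k : Fin n, ⁅v 0, v k.succ⁆ = 0) (hsucc : ∀ k l : Fin n, ⁅v k.succ, v l.succ⁆ = 0)
    (i j : Fin (n + 1)) (hij : i < j) : ⁅v i, v j⁆ = 0 := by
  cases j using Fin.cases with
  | zero => exact absurd hij (Fin.not_lt_zero _)
  | succ l =>
    cases i using Fin.cases with
    | zero => exact h0 l
    | succ k => exact hsucc k l

theorem soA_transpose {n : ℕ} (a b : Fin n) : (soA a b)ᵀ = -soA a b := by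
  ext i j
  simp [soA, Matrix.single, and_comm]

theorem soA_mulVec_single_of_ne {n : ℕ} {a b s : Fin n} (ha : s ≠ a) (hb : s ≠ b) :
    soA a b *ᵥ Pi.single s 1 = 0 := by
  ext i
  simp [soA, Matrix.single, hb.symm, ha.symm]

theorem so_n_lambda_is_cycle_general (m : ℕ)
    (H : Type*) [LieRing H] [LieAlgebra ℝ H]
    (fg : Matrix (Fin (m+3)) (Fin (m+3)) ℝ →ₗ[ℝ] H)
    (fv : (Fin (m+3) → ℝ) →ₗ[ℝ] H)
    (hact : ∀ (X : Matrix (Fin (m+3)) (Fin (m+3)) ℝ) (v : Fin (m+3) → ℝ),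
      Xᵀ = -X → ⁅fg X, fv v⁆ = fv (X.mulVec v))
    (habelian : ∀ v w : Fin (m+3) → ℝ, ⁅fv v, fv w⁆ = 0)
    (dL : (⨂[ℝ]^(m+2) H) →ₗ[ℝ] ⨂[ℝ]^(m+1) H)
    (hdL : ∀ v : Fin (m+2) → H,
      dL (PiTensorProduct.tprod ℝ v) =
        ∑ i : Fin (m+2), ∑ j : Fin (m+2),
          if hij : i < j then
            ((-1 : ℝ) ^ ((j : ℕ) + 1)) • PiTensorProduct.tprod ℝ (bdel v i j hij)
          else 0) :
    dL (((Nat.factorial (m+1) : ℝ))⁻¹ •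
      ∑ σ ∈ Finset.univ.filter (fun σ : Equiv.Perm (Fin (m+3)) =>
          σ 0 < σ 1 ∧ ∀ a b : Fin (m+3), 2 ≤ (a : ℕ) → a < b → σ a < σ b),
        ∑ τ : Equiv.Perm (Fin (m+1)),
          ((Equiv.Perm.sign σ : ℤ) * (Equiv.Perm.sign τ : ℤ)) •
            PiTensorProduct.tprod ℝ
              (Fin.cons (fg (soA (σ 0) (σ 1)))
                (fun i : Fin (m+1) =>
                  fv (Pi.single (σ ((τ i).succ.succ)) 1)))) = 0 := by
  rw [map_smul, map_sum, Finset.sum_eq_zero, smul_zero]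
  intro σ _
  rw [map_sum]
  refine Finset.sum_eq_zero fun τ _ => ?_
  have hα_kills : ∀ k, ⁅fg (soA (σ 0) (σ 1)), fv (Pi.single (σ ((τ k).succ.succ)) 1)⁆ = 0 :=
    fun k => by
      rw [hact _ _ (soA_transpose _ _),
        soA_mulVec_single_of_ne (σ.injective.ne (Fin.succ_ne_zero _))
          (σ.injective.ne (Fin.succ_succ_ne_one _)), map_zero]
  rw [map_zsmul, hdL,
    sum_tprod_bdel_eq_zero _ (lie_eq_zero_of_lt_of_forall_succ _ hα_kills fun _ _ => habelian _ _),
    zsmul_zero]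

/-- for `g = so_n(ℝ) ⊆ h = so_n(ℝ) ⋉ ℝⁿ` (`n = m + 3 ≥ 3`, presented by
`fg`, `fv` with the semidirect product bracket relations), the element
`λ = Σ_{σ ∈ Sh(2,n-2)} sgn(σ) α_{σ(1)σ(2)} ⊗ ε(e_{σ(3)} ∧ ... ∧ e_{σ(n)}) ∈ h^{⊗(n-1)}`
is a cycle in the Leibniz complex of `h`: `d_Leibniz(λ) = 0`.  Here `ε` is the
(normalized) skew-symmetrization map and `dL` is the Leibniz differential,
characterized on generators. -/
theorem so_n_lambda_is_cycle (m : ℕ)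
    (H : Type*) [LieRing H] [LieAlgebra ℝ H]
    (fg : Matrix (Fin (m+3)) (Fin (m+3)) ℝ →ₗ[ℝ] H)
    (fv : (Fin (m+3) → ℝ) →ₗ[ℝ] H)
    (hfg : ∀ X Y : Matrix (Fin (m+3)) (Fin (m+3)) ℝ,
      Xᵀ = -X → Yᵀ = -Y → fg ⁅X, Y⁆ = ⁅fg X, fg Y⁆)
    (hact : ∀ (X : Matrix (Fin (m+3)) (Fin (m+3)) ℝ) (v : Fin (m+3) → ℝ),
      Xᵀ = -X → ⁅fg X, fv v⁆ = fv (X.mulVec v))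
    (habelian : ∀ v w : Fin (m+3) → ℝ, ⁅fv v, fv w⁆ = 0)
    (dL : (⨂[ℝ]^(m+2) H) →ₗ[ℝ] ⨂[ℝ]^(m+1) H)
    (hdL : ∀ v : Fin (m+2) → H,
      dL (PiTensorProduct.tprod ℝ v) =
        ∑ i : Fin (m+2), ∑ j : Fin (m+2),
          if hij : i < j then
            ((-1 : ℝ) ^ ((j : ℕ) + 1)) • PiTensorProduct.tprod ℝ (bdel v i j hij)
          else 0) :
    dL (((Nat.factorial (m+1) : ℝ))⁻¹ •
      ∑ σ ∈ Finset.univ.filter (fun σ : Equiv.Perm (Fin (m+3)) =>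
          σ 0 < σ 1 ∧ ∀ a b : Fin (m+3), 2 ≤ (a : ℕ) → a < b → σ a < σ b),
        ∑ τ : Equiv.Perm (Fin (m+1)),
          ((Equiv.Perm.sign σ : ℤ) * (Equiv.Perm.sign τ : ℤ)) •
            PiTensorProduct.tprod ℝ
              (Fin.cons (fg (soA (σ 0) (σ 1)))
                (fun i : Fin (m+1) =>
                  fv (Pi.single (σ ((τ i).succ.succ)) 1)))) = 0 :=
  so_n_lambda_is_cycle_general m H fg fv hact habelian dL hdL
end
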